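/- arXiv:2402.06886 — 6 statements merged into one kernel-verified Lean document; each statement's English description precedes it below -/
import Mathlib

section
/- Suppose F_λ = f + λp satisfies: f is L-Lipschitz in y, p obeys the gradient dominance condition max_{y'∈Y}⟨∇_y p(x,y), y - y'⟩ ≥ μ·p(x,y) for some μ>0, and Y is compact with diameter C_u. If (x_λ, y_λ) is a first-order stationary point of F_λ in y (i.e., ⟨∇_y F_λ(x_λ,y_λ), y_λ - y'⟩ ≤ 0 for all y' ∈ Y), then p(x_λ, y_λ) ≤ L·C_u/(λμ). -/
open RealInnerProductSpace

/-! Test the first-order stationarity condition against the point `y'` supplied by gradient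
dominance: the penalty part of `⟨∇F_λ, y - y'⟩` is at least `λ μ p`, while the `f` part is at
least `-L C_u` by Cauchy–Schwarz, and the sum is nonpositive. -/

theorem mul_le_of_inner_add_smul_nonpos {E : Type*} [NormedAddCommGroup E]
    [InnerProductSpace ℝ E] {g q d : E} {lam a L C : ℝ} (hlam : 0 ≤ lam) (hL : 0 ≤ L)
    (hstat : ⟪g + lam • q, d⟫ ≤ 0) (hq : a ≤ ⟪q, d⟫) (hg : ‖g‖ ≤ L) (hd : ‖d‖ ≤ C) :
    lam * a ≤ L * C := by
  rw [inner_add_left, real_inner_smul_left] at hstat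
  calc lam * a ≤ lam * ⟪q, d⟫ := mul_le_mul_of_nonneg_left hq hlam
    _ ≤ -⟪g, d⟫ := by linarith
    _ ≤ ‖g‖ * ‖d‖ := (neg_le_abs _).trans (abs_real_inner_le_norm g d)
    _ ≤ L * C := mul_le_mul hg hd (norm_nonneg _) hL

theorem stationary_point_penalty_bound_general {X E : Type*} [NormedAddCommGroup E]
    [InnerProductSpace ℝ E]
    (Y : Set E)
    (p : X → E → ℝ) (Gf Gp : X → E → E) (L Cu μ lam : ℝ)
    (hL : 0 ≤ L) (hμ : 0 < μ) (hlam : 0 < lam)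
    (hGfbound : ∀ x y, ‖Gf x y‖ ≤ L)
    (hdom : ∀ x, ∀ y ∈ Y, ∃ y' ∈ Y, μ * p x y ≤ ⟪Gp x y, y - y'⟫)
    (hdiam : ∀ y ∈ Y, ∀ y' ∈ Y, ‖y - y'‖ ≤ Cu)
    (xl : X) (yl : E) (hyl : yl ∈ Y)
    (hstat : ∀ y' ∈ Y, ⟪Gf xl yl + lam • Gp xl yl, yl - y'⟫ ≤ 0) :
    p xl yl ≤ L * Cu / (lam * μ) := by
  obtain ⟨y', hy', hdom'⟩ := hdom xl yl hyl
  have key : lam * (μ * p xl yl) ≤ L * Cu :=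
    mul_le_of_inner_add_smul_nonpos hlam.le hL (hstat y' hy') hdom' (hGfbound xl yl)
      (hdiam yl hyl y' hy')
  rw [le_div_iff₀ (mul_pos hlam hμ)]
  linarith

/-- **Penalty value at a stationary point under gradient dominance.**
If `‖∇_y f‖ ≤ L`, the penalty `p ≥ 0` obeys the gradient dominance condition
`max_{y'∈Y} ⟨∇_y p(x,y), y - y'⟩ ≥ μ p(x,y)`, `Y` has diameter `C_u`, and
`(xλ, yλ)` is first-order stationary in `y` for `F_λ = f + λ p`, then
`p(xλ, yλ) ≤ L C_u / (λ μ)`. -/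
theorem stationary_point_penalty_bound {X E : Type*} [NormedAddCommGroup E]
    [InnerProductSpace ℝ E] [CompleteSpace E]
    (Y : Set E) (hYconv : Convex ℝ Y) (hYcomp : IsCompact Y)
    (f p : X → E → ℝ) (Gf Gp : X → E → E) (L Cu μ lam : ℝ)
    (hL : 0 ≤ L) (hμ : 0 < μ) (hlam : 0 < lam)
    (hGf : ∀ x y, HasGradientAt (f x) (Gf x y) y)
    (hGp : ∀ x y, HasGradientAt (p x) (Gp x y) y)
    (hGfbound : ∀ x y, ‖Gf x y‖ ≤ L)
    (hppos : ∀ x y, 0 ≤ p x y)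
    (hdom : ∀ x, ∀ y ∈ Y, ∃ y' ∈ Y, μ * p x y ≤ ⟪Gp x y, y - y'⟫)
    (hdiam : ∀ y ∈ Y, ∀ y' ∈ Y, ‖y - y'‖ ≤ Cu)
    (xl : X) (yl : E) (hyl : yl ∈ Y)
    (hstat : ∀ y' ∈ Y, ⟪Gf xl yl + lam • Gp xl yl, yl - y'⟫ ≤ 0) :
    p xl yl ≤ L * Cu / (lam * μ) :=
  stationary_point_penalty_bound_general Y p Gf Gp L Cu μ lam hL hμ hlam hGfbound hdom hdiam xl yl
    hyl hstat
end

section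
/- Let ℓ : ℝ^d × F → ℝ be continuous with F compact, ∇_x ℓ continuous in (x,y), and suppose that for every x all maximizers y, y' ∈ argmax_{y∈F} ℓ(x,y) satisfy ∇_x ℓ(x,y) = ∇_x ℓ(x,y'). Then h(x) := max_{y∈F} ℓ(x,y) is differentiable with ∇h(x) = ∇_x ℓ(x, y*) for any maximizer y*. -/
open Set Filter Topology Metric InnerProductSpace

/-! With `y₀` a maximizer at `x` and `y₁` one at `x'`, the increment `h x' - h x` lies between
`ℓ (x', y₀) - ℓ (x, y₀)` and `ℓ (x', y₁) - ℓ (x, y₁)`. Compactness of `F` makes the maximizers at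
points near `x` lie in any open neighbourhood of the maximizers at `x`, on which the partial
derivative is close to its common value `D x y₀`, and makes `D` continuous in `x` uniformly in `y`.
The mean value inequality then gives both bounds to first order in `x' - x`. -/

theorem ciSup_eq_of_isMaxOn_univ {ι β : Type*} [ConditionallyCompleteLinearOrder β] {f : ι → β}
    {y : ι} (hy : IsMaxOn f univ y) : ⨆ z, f z = f y :=
  have : Nonempty ι := ⟨y⟩
  ciSup_eq_of_forall_le_of_forall_lt_exists_gt (isMaxOn_univ_iff.mp hy) fun _ h => ⟨y, h⟩

section Compact

variable {X F : Type*} [TopologicalSpace X] [TopologicalSpace F] [CompactSpace F]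

theorem eventually_forall_isMaxOn_mem {β : Type*} [TopologicalSpace β] [Preorder β]
    [OrderClosedTopology β] {ℓ : X × F → β} (hℓ : Continuous ℓ) {U : Set F} (hU : IsOpen U)
    {x : X} (hx : ∀ y, IsMaxOn (fun z => ℓ (x, z)) univ y → y ∈ U) :
    ∀ᶠ x' in 𝓝 x, ∀ y, IsMaxOn (fun z => ℓ (x', z)) univ y → y ∈ U := by
  -- pairs `(x', y)` with `y` a maximizer of `ℓ (x', ·)` outside `U` form a closed set, and
  -- projecting along the compact factor keeps it closed
  let S := {p : X × F | p.2 ∉ U} ∩ ⋂ z, {p | ℓ (p.1, z) ≤ ℓ p}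
  have hS : IsClosed S := (hU.isClosed_compl.preimage continuous_snd).inter <|
    isClosed_iInter fun z => isClosed_le (hℓ.comp (continuous_fst.prodMk continuous_const)) hℓ
  have hxS : x ∉ Prod.fst '' S := by
    rintro ⟨⟨x₁, y⟩, ⟨hyU, hyS⟩, rfl⟩
    have hmax : ∀ z, ℓ (x₁, z) ≤ ℓ (x₁, y) := fun z => Set.mem_iInter.mp hyS z
    exact hyU (hx y (isMaxOn_univ_iff.mpr hmax))
  filter_upwards [(isClosedMap_fst_of_compactSpace S hS).isOpen_compl.mem_nhds hxS]
    with x' hx' y hy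
  by_contra hyU
  exact hx' ⟨(x', y), ⟨hyU, mem_iInter.mpr (isMaxOn_univ_iff.mp hy)⟩, rfl⟩

theorem Continuous.eventually_forall_dist_lt {M : Type*} [PseudoMetricSpace M] {f : X × F → M}
    (hf : Continuous f) (x : X) {ε : ℝ} (hε : 0 < ε) :
    ∀ᶠ x' in 𝓝 x, ∀ y, dist (f (x', y)) (f (x, y)) < ε := by
  have key := isCompact_univ.eventually_forall_of_forall_eventually (x₀ := x)
    (P := fun x' y => dist (f (x', y)) (f (x, y)) < ε) fun y _ => by
      have hcont : Continuous fun q : X × F => dist (f q) (f (x, q.2)) :=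
        hf.dist (hf.comp (continuous_const.prodMk continuous_snd))
      exact hcont.continuousAt.eventually_lt continuousAt_const (by simpa using hε)
  simpa using key

end Compact

section Danskin

variable {E F : Type*} [NormedAddCommGroup E] [NormedSpace ℝ E] [TopologicalSpace F]
  [CompactSpace F]

theorem hasFDerivAt_iSup_of_isMaxOn {ℓ : E × F → ℝ} (hℓ : Continuous ℓ)
    {D : E → F → StrongDual ℝ E} (hD : ∀ z y, HasFDerivAt (fun x' => ℓ (x', y)) (D z y) z)
    (hDcont : Continuous fun q : E × F => D q.1 q.2) {x : E} {y₀ : F}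
    (hy₀ : IsMaxOn (fun z => ℓ (x, z)) univ y₀)
    (hsame : ∀ y, IsMaxOn (fun z => ℓ (x, z)) univ y → D x y = D x y₀) :
    HasFDerivAt (fun x' => ⨆ y, ℓ (x', y)) (D x y₀) x := by
  rw [hasFDerivAt_iff_isLittleO, Asymptotics.isLittleO_iff]
  intro ε hε
  set φ := D x y₀
  set U := {y | ‖D x y - φ‖ < ε / 2}
  have hUopen : IsOpen U :=
    isOpen_lt ((hDcont.comp (Continuous.prodMk_right x)).sub continuous_const).norm
      continuous_const
  have hargmax := eventually_forall_isMaxOn_mem hℓ hUopen (x := x) fun y hy => by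
    simp [U, hsame y hy, half_pos hε]
  have hDclose := hDcont.eventually_forall_dist_lt x (half_pos hε)
  obtain ⟨r, hr, hball⟩ := Metric.eventually_nhds_iff_ball.mp (hargmax.and hDclose)
  have hlin : ∀ x' ∈ ball x r, ∀ y ∈ U,
      |ℓ (x', y) - ℓ (x, y) - φ (x' - x)| ≤ ε * ‖x' - x‖ := fun x' hx' y hy =>
    (convex_ball x r).norm_image_sub_le_of_norm_hasFDerivWithin_le'
      (fun z _ => (hD z y).hasFDerivWithinAt)
      (fun z hz => calc
        ‖D z y - φ‖ ≤ ‖D z y - D x y‖ + ‖D x y - φ‖ := norm_sub_le_norm_sub_add_norm_sub _ _ _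
        _ ≤ ε / 2 + ε / 2 :=
          add_le_add (dist_eq_norm (D z y) _ ▸ ((hball z hz).2 y).le) hy.le
        _ = ε := add_halves ε)
      (mem_ball_self hr) hx'
  filter_upwards [ball_mem_nhds x hr] with x' hx'
  obtain ⟨y₁, -, hy₁⟩ : ∃ y ∈ univ, IsMaxOn (fun z => ℓ (x', z)) univ y :=
    isCompact_univ.exists_isMaxOn ⟨y₀, mem_univ _⟩
      (hℓ.comp (Continuous.prodMk_right x')).continuousOn
  have hy₀U : y₀ ∈ U := show ‖φ - φ‖ < ε / 2 by simpa using half_pos hε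
  have hy₁U : y₁ ∈ U := (hball x' hx').1 y₁ hy₁
  have h₀ := abs_le.mp (hlin x' hx' y₀ hy₀U)
  have h₁ := abs_le.mp (hlin x' hx' y₁ hy₁U)
  have hx_le : ℓ (x, y₁) ≤ ℓ (x, y₀) := hy₀ (mem_univ y₁)
  have hx'_le : ℓ (x', y₀) ≤ ℓ (x', y₁) := hy₁ (mem_univ y₀)
  rw [ciSup_eq_of_isMaxOn_univ hy₁, ciSup_eq_of_isMaxOn_univ hy₀, Real.norm_eq_abs, abs_le]
  constructor <;> linarith [h₀.1, h₁.2]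

end Danskin

theorem generalized_danskin_general {d : ℕ} {F : Type*} [TopologicalSpace F] [CompactSpace F]
    (ℓ : EuclideanSpace ℝ (Fin d) × F → ℝ) (hcont : Continuous ℓ)
    (G : EuclideanSpace ℝ (Fin d) → F → EuclideanSpace ℝ (Fin d))
    (hgrad : ∀ x y, HasGradientAt (fun x' => ℓ (x', y)) (G x y) x)
    (hGcont : Continuous fun q : EuclideanSpace ℝ (Fin d) × F => G q.1 q.2)
    (hsame : ∀ x y y', IsMaxOn (fun z => ℓ (x, z)) Set.univ y →
      IsMaxOn (fun z => ℓ (x, z)) Set.univ y' → G x y = G x y')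
    (x : EuclideanSpace ℝ (Fin d)) (ystar : F)
    (hy : IsMaxOn (fun z => ℓ (x, z)) Set.univ ystar) :
    HasGradientAt (fun x' => ⨆ y, ℓ (x', y)) (G x ystar) x :=
  hasFDerivAt_iSup_of_isMaxOn hcont (D := fun z y => toDual ℝ _ (G z y)) hgrad
    ((toDual ℝ _).continuous.comp hGcont) hy fun y hy' => congrArg _ (hsame x y ystar hy' hy)

/-- **Generalized Danskin theorem.** Let `ℓ : ℝ^d × F → ℝ` be continuous with `F`
compact, `∇_x ℓ` jointly continuous, and suppose for each `x` the gradient `∇_x ℓ(x,·)`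
is constant on the set of maximizers. Then `h(x) = max_{y∈F} ℓ(x,y)` is differentiable
with `∇h(x) = ∇_x ℓ(x, y*)` for any maximizer `y*`. -/
theorem generalized_danskin {d : ℕ} {F : Type*} [TopologicalSpace F] [CompactSpace F]
    [Nonempty F]
    (ℓ : EuclideanSpace ℝ (Fin d) × F → ℝ) (hcont : Continuous ℓ)
    (G : EuclideanSpace ℝ (Fin d) → F → EuclideanSpace ℝ (Fin d))
    (hgrad : ∀ x y, HasGradientAt (fun x' => ℓ (x', y)) (G x y) x)
    (hGcont : Continuous fun q : EuclideanSpace ℝ (Fin d) × F => G q.1 q.2)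
    (hsame : ∀ x y y', IsMaxOn (fun z => ℓ (x, z)) Set.univ y →
      IsMaxOn (fun z => ℓ (x, z)) Set.univ y' → G x y = G x y')
    (x : EuclideanSpace ℝ (Fin d)) (ystar : F)
    (hy : IsMaxOn (fun z => ℓ (x, z)) Set.univ ystar) :
    HasGradientAt (fun x' => ⨆ y, ℓ (x', y)) (G x ystar) x :=
  generalized_danskin_general ℓ hcont G hgrad hGcont hsame x ystar hy
end

section
/- Let Z be a closed convex set and let F : Z → ℝ be L-smooth and bounded below by F_inf. Let α ≤ 1/L, let z_{k+1} = Proj_Z(z_k − α Ĝ_k), and let G(z_k) := (1/α)(z_k − Proj_Z[z_k − α∇F(z_k)]) denote the projected-gradient-mapping residual. If the inexactness satisfies 10 ‖Ĝ_k − ∇F(z_k)‖² ≤ (1/2)‖G(z_k)‖² + (1/2)ε for all k, then ∑_{k=1}^K ‖G(z_k)‖² ≤ 16(F(z_1) − F_inf)/α + K ε. -/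
open RealInnerProductSpace

set_option maxHeartbeats 1600000 in
/-- **Inexact projected gradient descent on a smooth function.**
If `F` is `L`-smooth on the closed convex set `Z`, bounded below by `Finf`,
`α ≤ 1/L`, the iterates follow `z_{k+1} = Proj_Z(z_k - α Ĝ_k)`, and the gradient
inexactness satisfies `10 ‖Ĝ_k - ∇F(z_k)‖² ≤ (1/2)‖G(z_k)‖² + (1/2)ε` where
`G(z) = (1/α)(z - Proj_Z(z - α ∇F(z)))` is the projected gradient mapping, then
`∑_{k=1}^K ‖G(z_k)‖² ≤ 16 (F(z_1) - Finf)/α + K ε`. -/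
theorem inexact_projected_gradient_descent {E : Type*} [NormedAddCommGroup E]
    [InnerProductSpace ℝ E] [CompleteSpace E]
    (Z : Set E) (hZclosed : IsClosed Z) (hZconv : Convex ℝ Z) (hZne : Z.Nonempty)
    (Proj : E → E) (hProjMem : ∀ u, Proj u ∈ Z)
    (hProjChar : ∀ u, ∀ w ∈ Z, ⟪u - Proj u, w - Proj u⟫ ≤ (0 : ℝ))
    (F : E → ℝ) (gradF : E → E) (L Finf α ε : ℝ) (K : ℕ)
    (hL : 0 < L) (hα : 0 < α) (hαL : α ≤ 1 / L) (hε : 0 ≤ ε)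
    (hgrad : ∀ z ∈ Z, HasGradientAt F (gradF z) z)
    (hsmooth : ∀ z ∈ Z, ∀ w ∈ Z, ‖gradF z - gradF w‖ ≤ L * ‖z - w‖)
    (hbelow : ∀ z ∈ Z, Finf ≤ F z)
    (z : ℕ → E) (Ghat : ℕ → E) (hz1 : z 1 ∈ Z)
    (hupdate : ∀ k, z (k + 1) = Proj (z k - α • Ghat k))
    (Gmap : E → E) (hGmap : ∀ u, Gmap u = (1 / α) • (u - Proj (u - α • gradF u)))
    (hinexact : ∀ k ∈ Finset.Icc 1 K,
      10 * ‖Ghat k - gradF (z k)‖ ^ 2 ≤ (1 / 2) * ‖Gmap (z k)‖ ^ 2 + (1 / 2) * ε) :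
    ∑ k ∈ Finset.Icc 1 K, ‖Gmap (z k)‖ ^ 2 ≤ 16 * (F (z 1) - Finf) / α + K * ε := by
  -- membership of iterates
  have hzmem : ∀ k : ℕ, z (k + 1) ∈ Z := fun k => by rw [hupdate k]; exact hProjMem _
  -- nonexpansiveness of the projection
  have hnonexp : ∀ u v, ‖Proj u - Proj v‖ ≤ ‖u - v‖ := by
    intro u v
    have h1 := hProjChar u (Proj v) (hProjMem v)
    have h2 := hProjChar v (Proj u) (hProjMem u)
    have comb : ‖Proj u - Proj v‖ ^ 2 ≤ ⟪u - v, Proj u - Proj v⟫ := by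
      have e : ⟪u - v, Proj u - Proj v⟫ - ‖Proj u - Proj v‖ ^ 2
          = - ⟪u - Proj u, Proj v - Proj u⟫ - ⟪v - Proj v, Proj u - Proj v⟫ := by
        rw [← real_inner_self_eq_norm_sq]
        have : - ⟪u - Proj u, Proj v - Proj u⟫ = ⟪u - Proj u, Proj u - Proj v⟫ := by
          rw [← inner_neg_right]; congr 1; abel
        rw [this, ← inner_sub_left, ← inner_sub_left]
        congr 1
        abel
      linarith
    have hle := real_inner_le_norm (u - v) (Proj u - Proj v)
    nlinarith [norm_nonneg (Proj u - Proj v), norm_nonneg (u - v)]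
  -- descent lemma
  have descent : ∀ x ∈ Z, ∀ y ∈ Z, F y ≤ F x + ⟪gradF x, y - x⟫ + L / 2 * ‖y - x‖ ^ 2 := by
    intro x hx y hy
    set Δ := y - x with hΔ
    set φ : ℝ → ℝ := fun t => F (x + t • Δ) - t * ⟪gradF x, Δ⟫ - L / 2 * t ^ 2 * ‖Δ‖ ^ 2 with hφ
    have hmemt : ∀ t ∈ Set.Icc (0:ℝ) 1, x + t • Δ ∈ Z := fun t ht =>
      hZconv.add_smul_sub_mem hx hy ht
    have hderiv : ∀ t ∈ Set.Icc (0:ℝ) 1,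
        HasDerivAt φ (⟪gradF (x + t • Δ), Δ⟫ - ⟪gradF x, Δ⟫ - L * t * ‖Δ‖ ^ 2) t := by
      intro t ht
      have hline : HasDerivAt (fun s : ℝ => x + s • Δ) Δ t := by
        simpa using ((hasDerivAt_id t).smul_const Δ).const_add x
      have hF := ((hgrad _ (hmemt t ht)).hasFDerivAt.comp_hasDerivAt t hline)
      have hF' : HasDerivAt (fun s : ℝ => F (x + s • Δ)) ⟪gradF (x + t • Δ), Δ⟫ t := by
        simpa [InnerProductSpace.toDual_apply_apply, Function.comp_def] using hF
      have h2 : HasDerivAt (fun s : ℝ => s * ⟪gradF x, Δ⟫) ⟪gradF x, Δ⟫ t := by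
        simpa using (hasDerivAt_id t).mul_const ⟪gradF x, Δ⟫
      have h3 : HasDerivAt (fun s : ℝ => L / 2 * s ^ 2 * ‖Δ‖ ^ 2) (L * t * ‖Δ‖ ^ 2) t := by
        have h4 := ((hasDerivAt_pow 2 t).const_mul (L / 2)).mul_const (‖Δ‖ ^ 2)
        refine h4.congr_deriv ?_
        ring
      exact (hF'.sub h2).sub h3
    have hcont : ContinuousOn φ (Set.Icc 0 1) := fun t ht =>
      (hderiv t ht).continuousAt.continuousWithinAt
    have hanti : AntitoneOn φ (Set.Icc 0 1) := by
      apply antitoneOn_of_deriv_nonpos (convex_Icc 0 1) hcont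
      · intro t ht
        rw [interior_Icc] at ht
        exact (hderiv t (Set.mem_Icc_of_Ioo ht)).differentiableAt.differentiableWithinAt
      · intro t ht
        rw [interior_Icc] at ht
        rw [(hderiv t (Set.mem_Icc_of_Ioo ht)).deriv]
        have hib : ⟪gradF (x + t • Δ) - gradF x, Δ⟫ ≤ ‖gradF (x + t • Δ) - gradF x‖ * ‖Δ‖ :=
          real_inner_le_norm _ _
        have hsm := hsmooth _ (hmemt t (Set.mem_Icc_of_Ioo ht)) x hx
        have hnorm : ‖x + t • Δ - x‖ = t * ‖Δ‖ := by
          rw [add_sub_cancel_left, norm_smul, Real.norm_eq_abs, abs_of_pos ht.1]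
        rw [hnorm] at hsm
        rw [inner_sub_left] at hib
        nlinarith [norm_nonneg Δ, norm_nonneg (gradF (x + t • Δ) - gradF x), ht.1.le]
    have h01 := hanti (Set.left_mem_Icc.mpr zero_le_one)
      (Set.right_mem_Icc.mpr zero_le_one) zero_le_one
    simp only [hφ, zero_smul, add_zero, one_smul, zero_pow, one_pow, mul_zero, zero_mul,
      sub_zero, one_mul] at h01
    have hxy : x + Δ = y := by rw [hΔ]; abel
    rw [hxy] at h01
    linarith
  -- the per-step decrease
  have step : ∀ k ∈ Finset.Icc 1 K,
      F (z (k + 1)) ≤ F (z k) - α / 16 * ‖Gmap (z k)‖ ^ 2 + α / 16 * ε := by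
    intro k hk
    have hzk : z k ∈ Z := by
      obtain ⟨hk1, hk2⟩ := Finset.mem_Icc.mp hk
      cases k with
      | zero => exact absurd hk1 (by norm_num)
      | succ m => exact hzmem m
    set a := ‖z (k + 1) - z k‖ with ha
    set b := ‖Ghat k - gradF (z k)‖ with hb
    set c := ‖Gmap (z k)‖ with hc
    have hanon : 0 ≤ a := norm_nonneg _
    have hbnon : 0 ≤ b := norm_nonneg _
    have hcnon : 0 ≤ c := norm_nonneg _
    -- projection inequality: α ⟪Ghat k, Δ⟫ ≤ -a²
    have hproj : α * ⟪Ghat k, z (k + 1) - z k⟫ ≤ -a ^ 2 := by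
      have hp := hProjChar (z k - α • Ghat k) (z k) hzk
      rw [← hupdate k] at hp
      have e1 : z k - α • Ghat k - z (k + 1) = (z k - z (k + 1)) - α • Ghat k := by abel
      rw [e1, inner_sub_left, real_inner_self_eq_norm_sq, real_inner_smul_left] at hp
      have e2 : ⟪Ghat k, z k - z (k + 1)⟫ = - ⟪Ghat k, z (k + 1) - z k⟫ := by
        rw [← inner_neg_right]; congr 1; abel
      rw [e2] at hp
      have e3 : ‖z k - z (k + 1)‖ = a := by rw [ha, norm_sub_rev]
      rw [e3] at hp
      linarith
    -- descent step combined
    have h1 : α * F (z (k + 1)) ≤ α * F (z k) + α * (b * a) - a ^ 2 / 2 := by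
      have hd := descent (z k) hzk (z (k + 1)) (hzmem k)
      have hsplit : ⟪gradF (z k), z (k + 1) - z k⟫
          = ⟪gradF (z k) - Ghat k, z (k + 1) - z k⟫ + ⟪Ghat k, z (k + 1) - z k⟫ := by
        rw [inner_sub_left]; ring
      have hb1 : ⟪gradF (z k) - Ghat k, z (k + 1) - z k⟫ ≤ b * a := by
        have := real_inner_le_norm (gradF (z k) - Ghat k) (z (k + 1) - z k)
        rw [norm_sub_rev] at this
        exact this
      have hαL' : α * L ≤ 1 := (le_div_iff₀ hL).mp hαL
      have hI : ⟪gradF (z k), z (k + 1) - z k⟫ ≤ b * a + ⟪Ghat k, z (k + 1) - z k⟫ := by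
        rw [hsplit]; linarith
      have hd' : α * F (z (k + 1)) ≤ α * (F (z k) + ⟪gradF (z k), z (k + 1) - z k⟫
          + L / 2 * a ^ 2) := mul_le_mul_of_nonneg_left hd hα.le
      have hI' : α * ⟪gradF (z k), z (k + 1) - z k⟫
          ≤ α * (b * a + ⟪Ghat k, z (k + 1) - z k⟫) := mul_le_mul_of_nonneg_left hI hα.le
      nlinarith [sq_nonneg a]
    -- relation between exact and inexact gradient mapping norms
    have h3 : α * c ≤ a + α * b := by
      have hGc : α * c = ‖z k - Proj (z k - α • gradF (z k))‖ := by
        rw [hc, hGmap, norm_smul, Real.norm_eq_abs, abs_of_pos (by positivity : (0:ℝ) < 1 / α)]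
        field_simp
      have htri : ‖z k - Proj (z k - α • gradF (z k))‖
          ≤ ‖z k - z (k + 1)‖ + ‖z (k + 1) - Proj (z k - α • gradF (z k))‖ :=
        norm_sub_le_norm_sub_add_norm_sub _ _ _
      have hne : ‖z (k + 1) - Proj (z k - α • gradF (z k))‖ ≤ α * b := by
        rw [hupdate k]
        have h := hnonexp (z k - α • Ghat k) (z k - α • gradF (z k))
        have e : z k - α • Ghat k - (z k - α • gradF (z k)) = α • (gradF (z k) - Ghat k) := by
          rw [smul_sub]; abel
        rw [e, norm_smul, Real.norm_eq_abs, abs_of_pos hα] at h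
        have hbe : b = ‖gradF (z k) - Ghat k‖ := by rw [hb, norm_sub_rev]
        rw [hbe]
        exact h
      have e3 : ‖z k - z (k + 1)‖ = a := by rw [ha, norm_sub_rev]
      rw [e3] at htri
      rw [hGc]
      linarith
    have h4 := hinexact k hk
    rw [← hb, ← hc] at h4
    -- combine everything
    have h3sq : α ^ 2 * c ^ 2 ≤ (a + α * b) ^ 2 := by
      have := mul_self_le_mul_self (by positivity : (0:ℝ) ≤ α * c) h3
      nlinarith
    have h16 : (0:ℝ) < 16 * α := by positivity
    have final16 : 16 * α * F (z (k + 1))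
        ≤ 16 * α * (F (z k) - α / 16 * c ^ 2 + α / 16 * ε) := by
      nlinarith [sq_nonneg (a - 2 * α * b), sq_nonneg (a - α * b),
        mul_nonneg (mul_nonneg hα.le hα.le) hbnon, h1, h3sq, h4,
        mul_le_mul_of_nonneg_left h4 (by positivity : (0:ℝ) ≤ α ^ 2)]
    exact le_of_mul_le_mul_left (by linarith [final16]) h16
  -- telescoping sum
  have main : ∀ n : ℕ, n ≤ K →
      F (z (n + 1)) + α / 16 * ∑ k ∈ Finset.Icc 1 n, ‖Gmap (z k)‖ ^ 2
        ≤ F (z 1) + n * (α / 16 * ε) := by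
    intro n
    induction n with
    | zero => intro _; rw [Finset.Icc_eq_empty (by omega)]; simp
    | succ m ih =>
      intro hn
      have ihm := ih (le_trans (Nat.le_succ m) hn)
      have hs := step (m + 1) (Finset.mem_Icc.mpr ⟨Nat.succ_le_succ (Nat.zero_le m), hn⟩)
      rw [Finset.sum_Icc_succ_top (by omega : 1 ≤ m + 1), mul_add]
      push_cast
      linarith
  have hm := main K le_rfl
  have hlb := hbelow (z (K + 1)) (hzmem K)
  set S := ∑ k ∈ Finset.Icc 1 K, ‖Gmap (z k)‖ ^ 2 with hS
  have key : α / 16 * S ≤ (F (z 1) - Finf) + K * (α / 16 * ε) := by linarith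
  have h16 : (0:ℝ) < α / 16 := by positivity
  have h2 : S ≤ ((F (z 1) - Finf) + K * (α / 16 * ε)) * (16 / α) := by
    have hSe : S = (α / 16 * S) * (16 / α) := by field_simp
    rw [hSe]
    exact mul_le_mul_of_nonneg_right key (by positivity)
  have heq : ((F (z 1) - Finf) + K * (α / 16 * ε)) * (16 / α)
      = 16 * (F (z 1) - Finf) / α + K * ε := by
    field_simp
  linarith [heq ▸ h2]
end

section
/- For a τ-regularized finite MDP with direct parameterization, the regularized policy gradient formula holds: ∇_π V^π(ρ) = (1/(1−γ)) [ d^π(s) ( Q^π(s,·) − τ ∇h_s(π(s)) ) ]_{s∈S}, where d^π is the discounted state visitation distribution starting from ρ. -/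
/-!
Write `P^π` for the transition matrix `P^π(s, s') = ∑ₐ π(a|s) P(s'|s,a)` and `c_π` for the
regularized one-step reward. `P^π` is row-stochastic, so `‖γ P^π‖ < 1` in the ℓ∞ operator norm, and
summing the Neumann series gives `V^π(ρ) = ρᵀ (I - γ P^π)⁻¹ c_π` and
`d^π = (1 - γ) ρᵀ (I - γ P^π)⁻¹`. The condition `‖γ P^π‖ < 1` is open, `P^π` is linear in `π` and
`c_π` differentiable, so `V^π(ρ)` is differentiable. By the product rule and
`d(M⁻¹) = -M⁻¹ dM M⁻¹`, its derivative in the direction `u` is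
`ρᵀ (I - γ P^π)⁻¹ (dc_π u + γ P^u V^π)`, and `dc_π u + γ P^u V^π` is exactly
`∑ₐ u(s,a) Q^π(s,a) - τ ⟨∇h_s(π(s)), u(s)⟩`.
-/

open scoped BigOperators

noncomputable section

def stateDist {S A : Type*} [Fintype S] [Fintype A] (P : S → A → S → ℝ)
    (π : S → A → ℝ) (ρ : S → ℝ) : ℕ → S → ℝ
  | 0 => ρ
  | t + 1 => fun s' => ∑ s, ∑ a, stateDist P π ρ t s * π s a * P s a s'

/-- Regularized value function `V^π_{M_τ}(ρ)`. -/
def valueFun {S A : Type*} [Fintype S] [Fintype A] (γ τ : ℝ) (r : S → A → ℝ)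
    (P : S → A → S → ℝ) (h : S → (A → ℝ) → ℝ) (π : S → A → ℝ) (ρ : S → ℝ) : ℝ :=
  ∑' t : ℕ, γ ^ t * ∑ s, stateDist P π ρ t s *
    ((∑ a, π s a * r s a) - τ * h s (π s))

/-- Regularized value function started from state `s`. -/
def valueFunState {S A : Type*} [Fintype S] [Fintype A] [DecidableEq S]
    (γ τ : ℝ) (r : S → A → ℝ) (P : S → A → S → ℝ) (h : S → (A → ℝ) → ℝ)
    (π : S → A → ℝ) (s : S) : ℝ :=
  valueFun γ τ r P h π (fun s' => if s' = s then 1 else 0)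

/-- Regularized Q-function: `Q^π(s,a) = r(s,a) + γ E_{s'∼P(s,a)}[V^π(s')]`. -/
def qFun {S A : Type*} [Fintype S] [Fintype A] [DecidableEq S]
    (γ τ : ℝ) (r : S → A → ℝ) (P : S → A → S → ℝ) (h : S → (A → ℝ) → ℝ)
    (π : S → A → ℝ) (s : S) (a : A) : ℝ :=
  r s a + γ * ∑ s', P s a s' * valueFunState γ τ r P h π s'

/-- Discounted state visitation distribution starting from `ρ`. -/
def dVisit {S A : Type*} [Fintype S] [Fintype A] (γ : ℝ) (P : S → A → S → ℝ)
    (π : S → A → ℝ) (ρ : S → ℝ) (sbar : S) : ℝ :=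
  (1 - γ) * ∑' t : ℕ, γ ^ t * stateDist P π ρ t sbar

open Matrix Topology

attribute [local instance] Matrix.linftyOpNormedRing Matrix.linftyOpNormedAlgebra

lemma Matrix.linfty_opNorm_le_one_of_mem_rowStochastic {n : Type*} [Fintype n] [DecidableEq n]
    {M : Matrix n n ℝ} (hM : M ∈ rowStochastic ℝ n) : ‖M‖ ≤ 1 := by
  rw [linfty_opNorm_def, NNReal.coe_le_one]
  refine Finset.sup_le fun i _ => le_of_eq ?_
  rw [← NNReal.coe_inj, NNReal.coe_sum, NNReal.coe_one, ← sum_row_of_mem_rowStochastic hM i]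
  exact Finset.sum_congr rfl fun j _ => Real.norm_of_nonneg (nonneg_of_mem_rowStochastic hM)

section MDP

variable {S A : Type*} [Fintype S] [Fintype A]

def transitionMatrix (P : S → A → S → ℝ) : (S → A → ℝ) →L[ℝ] Matrix S S ℝ :=
  LinearMap.toContinuousLinearMap
    { toFun := fun π => of fun s s' => ∑ a, π s a * P s a s'
      map_add' := fun π π' => by ext s s'; simp [add_mul, Finset.sum_add_distrib]
      map_smul' := fun c π => by ext s s'; simp [Finset.mul_sum, mul_assoc] }

@[simp]
lemma transitionMatrix_apply (P : S → A → S → ℝ) (π : S → A → ℝ) (s s' : S) :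
    transitionMatrix P π s s' = ∑ a, π s a * P s a s' := rfl

def policyExpectation (f : S → A → ℝ) : (S → A → ℝ) →L[ℝ] (S → ℝ) :=
  LinearMap.toContinuousLinearMap
    { toFun := fun π s => ∑ a, π s a * f s a
      map_add' := fun π π' => by ext s; simp [add_mul, Finset.sum_add_distrib]
      map_smul' := fun c π => by ext s; simp [Finset.mul_sum, mul_assoc] }

@[simp]
lemma policyExpectation_apply (f : S → A → ℝ) (π : S → A → ℝ) (s : S) :
    policyExpectation f π s = ∑ a, π s a * f s a := rfl

def regularizedReward (τ : ℝ) (r : S → A → ℝ) (h : S → (A → ℝ) → ℝ) (π : S → A → ℝ) : S → ℝ :=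
  policyExpectation r π - τ • fun s => h s (π s)

lemma hasFDerivAt_regularizedReward (τ : ℝ) (r : S → A → ℝ) {h : S → (A → ℝ) → ℝ}
    {π : S → A → ℝ} (hh : ∀ s, DifferentiableAt ℝ (h s) (π s)) :
    HasFDerivAt (regularizedReward τ r h) (policyExpectation r - τ •
      ContinuousLinearMap.pi fun s => (fderiv ℝ (h s) (π s)).comp (ContinuousLinearMap.proj s)) π :=
  (policyExpectation r).hasFDerivAt.sub <| HasFDerivAt.const_smul
    (hasFDerivAt_pi.2 fun s => (hh s).hasFDerivAt.comp π (hasFDerivAt_apply s π)) τ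

def dotProductMulVecL (ρ : S → ℝ) : Matrix S S ℝ →L[ℝ] (S → ℝ) →L[ℝ] ℝ :=
  ((mulVecBilin ℝ ℝ).compr₂ (dotProductBilin ℝ ℝ ρ)).toContinuousBilinearMap

@[simp]
lemma dotProductMulVecL_apply (ρ : S → ℝ) (M : Matrix S S ℝ) (v : S → ℝ) :
    dotProductMulVecL ρ M v = ρ ⬝ᵥ (M *ᵥ v) := rfl

lemma transitionMatrix_mem_rowStochastic [DecidableEq S] {P : S → A → S → ℝ}
    (hP : ∀ s a, (∀ s', 0 ≤ P s a s') ∧ ∑ s', P s a s' = 1)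
    {π : S → A → ℝ} (hπ : ∀ s, (∀ a, 0 ≤ π s a) ∧ ∑ a, π s a = 1) :
    transitionMatrix P π ∈ rowStochastic ℝ S := by
  refine mem_rowStochastic_iff_sum.2 ⟨fun s s' => ?_, fun s => ?_⟩
  · exact Finset.sum_nonneg fun a _ => mul_nonneg ((hπ s).1 a) ((hP s a).1 s')
  · simp only [transitionMatrix_apply]
    rw [Finset.sum_comm]
    simp [← Finset.mul_sum, (hP s _).2, (hπ s).2]

variable [DecidableEq S]

lemma norm_smul_transitionMatrix_lt_one {γ : ℝ} (hγ : |γ| < 1) {P : S → A → S → ℝ}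
    (hP : ∀ s a, (∀ s', 0 ≤ P s a s') ∧ ∑ s', P s a s' = 1)
    {π : S → A → ℝ} (hπ : ∀ s, (∀ a, 0 ≤ π s a) ∧ ∑ a, π s a = 1) :
    ‖γ • transitionMatrix P π‖ < 1 := by
  rw [norm_smul, Real.norm_eq_abs]
  calc |γ| * ‖transitionMatrix P π‖ ≤ |γ| * 1 := by
        gcongr
        exact linfty_opNorm_le_one_of_mem_rowStochastic (transitionMatrix_mem_rowStochastic hP hπ)
    _ < 1 := by rwa [mul_one]

/-- `(I - γ P^π)⁻¹`; `Ring.inverse` is `0` at non-units, so every lemma assumes `‖γ P^π‖ < 1`. -/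
def discountedResolvent (γ : ℝ) (P : S → A → S → ℝ) (π : S → A → ℝ) : Matrix S S ℝ :=
  Ring.inverse (1 - γ • transitionMatrix P π)

lemma stateDist_eq_vecMul_pow (P : S → A → S → ℝ) (π : S → A → ℝ) (ρ : S → ℝ) (t : ℕ) :
    stateDist P π ρ t = ρ ᵥ* transitionMatrix P π ^ t := by
  induction t with
  | zero => simp [stateDist]
  | succ t ih =>
    ext s'
    rw [pow_succ, ← vecMul_vecMul, ← ih]
    simp only [stateDist, vecMul, dotProduct, transitionMatrix_apply, Finset.mul_sum, mul_assoc]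

variable {γ : ℝ} {P : S → A → S → ℝ} {π : S → A → ℝ}

lemma hasSum_stateDist_dotProduct (ρ v : S → ℝ) (hπ : ‖γ • transitionMatrix P π‖ < 1) :
    HasSum (fun t => γ ^ t * (stateDist P π ρ t ⬝ᵥ v))
      (ρ ⬝ᵥ (discountedResolvent γ P π *ᵥ v)) := by
  have hsum : HasSum (fun t => ρ ⬝ᵥ ((γ • transitionMatrix P π) ^ t *ᵥ v))
      (ρ ⬝ᵥ (discountedResolvent γ P π *ᵥ v)) :=
    (hasSum_geom_series_inverse _ hπ).mapL ((dotProductMulVecL ρ).flip v)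
  have hterm (t : ℕ) :
      γ ^ t * (stateDist P π ρ t ⬝ᵥ v) = ρ ⬝ᵥ ((γ • transitionMatrix P π) ^ t *ᵥ v) := by
    rw [smul_pow, smul_mulVec, dotProduct_smul, dotProduct_mulVec, ← stateDist_eq_vecMul_pow,
      smul_eq_mul]
  simpa only [hterm] using hsum

lemma valueFun_eq_dotProduct_discountedResolvent_mulVec (τ : ℝ) (r : S → A → ℝ)
    (h : S → (A → ℝ) → ℝ) (ρ : S → ℝ) (hπ : ‖γ • transitionMatrix P π‖ < 1) :
    valueFun γ τ r P h π ρ = ρ ⬝ᵥ (discountedResolvent γ P π *ᵥ regularizedReward τ r h π) :=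
  (hasSum_stateDist_dotProduct ρ _ hπ).tsum_eq

lemma valueFunState_eq_discountedResolvent_mulVec (τ : ℝ) (r : S → A → ℝ) (h : S → (A → ℝ) → ℝ)
    (hπ : ‖γ • transitionMatrix P π‖ < 1) (s : S) :
    valueFunState γ τ r P h π s = (discountedResolvent γ P π *ᵥ regularizedReward τ r h π) s := by
  have hsingle : (fun s' => if s' = s then (1 : ℝ) else 0) = Pi.single s 1 := by
    ext s'; exact (Pi.single_apply s 1 s').symm
  rw [valueFunState, valueFun_eq_dotProduct_discountedResolvent_mulVec τ r h _ hπ, hsingle,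
    single_one_dotProduct]

lemma dVisit_eq_smul_vecMul_discountedResolvent (ρ : S → ℝ) (hπ : ‖γ • transitionMatrix P π‖ < 1) :
    dVisit γ P π ρ = (1 - γ) • (ρ ᵥ* discountedResolvent γ P π) := by
  ext s
  have hsum := hasSum_stateDist_dotProduct ρ (Pi.single s 1) hπ
  simp only [dotProduct_single_one] at hsum
  rw [dVisit, hsum.tsum_eq, Pi.smul_apply, smul_eq_mul, dotProduct_mulVec, dotProduct_single_one]

lemma sum_dVisit_mul (ρ g : S → ℝ) (hπ : ‖γ • transitionMatrix P π‖ < 1) :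
    ∑ s, dVisit γ P π ρ s * g s = (1 - γ) * ρ ⬝ᵥ (discountedResolvent γ P π *ᵥ g) := by
  rw [dVisit_eq_smul_vecMul_discountedResolvent ρ hπ, dotProduct_mulVec]
  simp only [dotProduct, Pi.smul_apply, smul_eq_mul, Finset.mul_sum, mul_assoc]

lemma sum_mul_qFun (τ : ℝ) (r : S → A → ℝ) (h : S → (A → ℝ) → ℝ)
    (hπ : ‖γ • transitionMatrix P π‖ < 1) (u : S → A → ℝ) (s : S) :
    ∑ a, u s a * qFun γ τ r P h π s a = policyExpectation r u s +
      γ * (transitionMatrix P u *ᵥ (discountedResolvent γ P π *ᵥ regularizedReward τ r h π)) s := by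
  simp only [qFun, valueFunState_eq_discountedResolvent_mulVec τ r h hπ]
  generalize discountedResolvent γ P π *ᵥ regularizedReward τ r h π = V
  simp only [mulVec, dotProduct, transitionMatrix_apply, policyExpectation_apply, mul_add,
    Finset.sum_add_distrib, Finset.mul_sum, Finset.sum_mul]
  rw [Finset.sum_comm]
  congr 1
  exact Finset.sum_congr rfl fun _ _ => Finset.sum_congr rfl fun _ _ => by ring

lemma hasFDerivAt_discountedResolvent (hπ : ‖γ • transitionMatrix P π‖ < 1) :
    HasFDerivAt (discountedResolvent γ P) (γ • (ContinuousLinearMap.mulLeftRight ℝ (Matrix S S ℝ)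
      (discountedResolvent γ P π) (discountedResolvent γ P π)).comp (transitionMatrix P)) π := by
  obtain ⟨B, hB⟩ := isUnit_one_sub_of_norm_lt_one hπ
  have hinv : ((B⁻¹ : (Matrix S S ℝ)ˣ) : Matrix S S ℝ) = discountedResolvent γ P π := by
    rw [discountedResolvent, ← hB, Ring.inverse_unit]
  have hlin : HasFDerivAt (fun π' => 1 - γ • transitionMatrix P π') (-(γ • transitionMatrix P)) π :=
    ((transitionMatrix P).hasFDerivAt.const_smul γ).const_sub 1
  have hR := hasFDerivAt_ringInverse (𝕜 := ℝ) B
  rw [hinv, hB] at hR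
  refine (hR.comp π hlin).congr_fderiv (ContinuousLinearMap.ext fun u => ?_)
  -- The ℓ∞ norm topology on matrices is only defeq, not syntactically equal, to the product
  -- topology, so the `*_apply` simp lemmas do not fire; the derivative is unfolded by `change`.
  change -(discountedResolvent γ P π * -(γ • transitionMatrix P u) * discountedResolvent γ P π) =
    γ • (discountedResolvent γ P π * transitionMatrix P u * discountedResolvent γ P π)
  rw [mul_neg, neg_mul, neg_neg, mul_smul_comm, smul_mul_assoc]

lemma valueFun_eventuallyEq_dotProduct (τ : ℝ) (r : S → A → ℝ) (h : S → (A → ℝ) → ℝ) (ρ : S → ℝ)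
    (hπ : ‖γ • transitionMatrix P π‖ < 1) :
    (fun π' => valueFun γ τ r P h π' ρ) =ᶠ[𝓝 π]
      fun π' => ρ ⬝ᵥ (discountedResolvent γ P π' *ᵥ regularizedReward τ r h π') := by
  have hopen : IsOpen {π' | ‖γ • transitionMatrix P π'‖ < 1} :=
    isOpen_lt (by fun_prop) continuous_const
  filter_upwards [hopen.mem_nhds hπ] with π' hπ'
  exact valueFun_eq_dotProduct_discountedResolvent_mulVec τ r h ρ hπ'

end MDP

theorem regularized_policy_gradient_general {S A : Type*} [Fintype S] [Fintype A]
    [DecidableEq S]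
    (γ τ : ℝ) (hγ0 : 0 < γ) (hγ1 : γ < 1)
    (r : S → A → ℝ) (P : S → A → S → ℝ)
    (hP : ∀ s a, (∀ s', 0 ≤ P s a s') ∧ ∑ s', P s a s' = 1)
    (ρ : S → ℝ)
    (h : S → (A → ℝ) → ℝ) (hdiffh : ∀ s, Differentiable ℝ (h s))
    (π : S → A → ℝ) (hπ : ∀ s, (∀ a, 0 ≤ π s a) ∧ ∑ a, π s a = 1) :
    DifferentiableAt ℝ (fun π' => valueFun γ τ r P h π' ρ) π ∧
    ∀ u : S → A → ℝ,
      fderiv ℝ (fun π' => valueFun γ τ r P h π' ρ) π u =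
        (1 / (1 - γ)) * ∑ s, dVisit γ P π ρ s *
          ((∑ a, u s a * qFun γ τ r P h π s a) - τ * fderiv ℝ (h s) (π s) (u s)) := by
  have hπ' := norm_smul_transitionMatrix_lt_one (abs_lt.2 ⟨by linarith, hγ1⟩) hP hπ
  have hG : HasFDerivAt (fun π' => ρ ⬝ᵥ (discountedResolvent γ P π' *ᵥ regularizedReward τ r h π'))
      _ π :=
    (dotProductMulVecL ρ).hasFDerivAt_of_bilinear (hasFDerivAt_discountedResolvent hπ')
      (hasFDerivAt_regularizedReward τ r fun s => hdiffh s (π s))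
  have hV := valueFun_eventuallyEq_dotProduct τ r h ρ hπ'
  refine ⟨hG.differentiableAt.congr_of_eventuallyEq hV, fun u => ?_⟩
  rw [hV.fderiv_eq, hG.fderiv, sum_dVisit_mul ρ _ hπ', ← mul_assoc, one_div,
    inv_mul_cancel₀ (sub_ne_zero.2 hγ1.ne'), one_mul]
  set R := discountedResolvent γ P π
  set c := regularizedReward τ r h π
  set Dc := (policyExpectation r u - τ • fun s => fderiv ℝ (h s) (π s) (u s))
  change ρ ⬝ᵥ (R *ᵥ Dc) + ρ ⬝ᵥ ((γ • (R * transitionMatrix P u * R)) *ᵥ c) = _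
  have hg : (fun s => ∑ a, u s a * qFun γ τ r P h π s a - τ * fderiv ℝ (h s) (π s) (u s)) =
      Dc + γ • (transitionMatrix P u *ᵥ (R *ᵥ c)) := by
    ext s
    simp only [Dc, sum_mul_qFun τ r h hπ' u s, policyExpectation_apply, Pi.add_apply, Pi.sub_apply,
      Pi.smul_apply, smul_eq_mul, mulVec_mulVec]
    ring
  rw [hg]
  simp only [mulVec_add, dotProduct_add, mulVec_smul, smul_mulVec, dotProduct_smul, smul_eq_mul,
    mulVec_mulVec, Matrix.mul_assoc]

/-- **Regularized policy gradient theorem with direct parameterization.**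
`∇_π V^π(ρ) = (1/(1-γ)) [ d^π(s) (Q^π(s,·) - τ ∇h_s(π(s))) ]_{s∈S}`, i.e. the value
function is differentiable in `π` and its derivative in any direction `u` is
`(1/(1-γ)) ∑_s d^π(s) (∑_a u(s,a) Q^π(s,a) - τ ⟨∇h_s(π(s)), u(s)⟩)`. -/
theorem regularized_policy_gradient {S A : Type*} [Fintype S] [Fintype A]
    [DecidableEq S] [Nonempty S] [Nonempty A]
    (γ τ : ℝ) (hγ0 : 0 < γ) (hγ1 : γ < 1) (hτ : 0 ≤ τ)
    (r : S → A → ℝ) (P : S → A → S → ℝ)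
    (hP : ∀ s a, (∀ s', 0 ≤ P s a s') ∧ ∑ s', P s a s' = 1)
    (ρ : S → ℝ) (hρpos : ∀ s, 0 ≤ ρ s) (hρ1 : ∑ s, ρ s = 1)
    (h : S → (A → ℝ) → ℝ) (hdiffh : ∀ s, Differentiable ℝ (h s))
    (π : S → A → ℝ) (hπ : ∀ s, (∀ a, 0 ≤ π s a) ∧ ∑ a, π s a = 1) :
    DifferentiableAt ℝ (fun π' => valueFun γ τ r P h π' ρ) π ∧
    ∀ u : S → A → ℝ,
      fderiv ℝ (fun π' => valueFun γ τ r P h π' ρ) π u =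
        (1 / (1 - γ)) * ∑ s, dVisit γ P π ρ s *
          ((∑ a, u s a * qFun γ τ r P h π s a) - τ * fderiv ℝ (h s) (π s) (u s)) :=
  regularized_policy_gradient_general γ τ hγ0 hγ1 r P hP ρ h hdiffh π hπ

end
end

section
/- Suppose the Nikaido–Isoda-type function ψ(x,π₁,π₂) = [max_{π₁'} V(x,π₁',π₂) − V(x,π₁,π₂)] + [V(x,π₁,π₂) − min_{π₂'} V(x,π₁,π₂')] where each inner optimization satisfies a gradient-dominance inequality with constant μ: max_{π₂'}⟨−∇_{π₂}V(x,π₁*,π₂), π₂'−π₂⟩ ≥ μ(max_{π₂''}(−V(x,π₁*,π₂'')) + V(x,π₁*,π₂)) and symmetrically for π₁. Then max_{π'∈Π}⟨∇_π ψ(x,π), π−π'⟩ ≥ μ·(ψ(x,π) − min_{π∈Π} ψ(x,π)), where ∇_π ψ(x,π) = (−∇_{π₁}V(x,π₁,π₂*), ∇_{π₂}V(x,π₁*,π₂)) with π₁*, π₂* the inner best responses. -/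
open RealInnerProductSpace

/-- **Gradient dominance for the Nikaido–Isoda (duality-gap) function of a two-player
zero-sum game.** Let `ψ(x,π₁,π₂) = max_{π₁'} V(x,π₁',π₂) - min_{π₂'} V(x,π₁,π₂')`
with best responses `b₁(x,π₂)`, `b₂(x,π₁)`, and suppose each inner optimization
satisfies a gradient-dominance inequality with constant `μ`. Then
`max_{π'∈Π} ⟨∇_π ψ(x,π), π - π'⟩ ≥ μ (ψ(x,π) - min_Π ψ(x,·))`, where
`∇_π ψ(x,π) = (-∇_{π₁} V(x,π₁,π₂*), ∇_{π₂} V(x,π₁*,π₂))`. -/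
theorem nikaido_isoda_gradient_dominance {X E1 E2 : Type*}
    [NormedAddCommGroup E1] [InnerProductSpace ℝ E1]
    [NormedAddCommGroup E2] [InnerProductSpace ℝ E2]
    (Pol1 : Set E1) (Pol2 : Set E2)
    (hc1 : Convex ℝ Pol1) (hc2 : Convex ℝ Pol2)
    (V : X → E1 → E2 → ℝ)
    (G1 : X → E1 → E2 → E1) (G2 : X → E1 → E2 → E2) (μ : ℝ) (hμ : 0 < μ)
    (b1 : X → E2 → E1) (b2 : X → E1 → E2)
    (hb1 : ∀ x π2, b1 x π2 ∈ Pol1 ∧ ∀ π1' ∈ Pol1, V x π1' π2 ≤ V x (b1 x π2) π2)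
    (hb2 : ∀ x π1, b2 x π1 ∈ Pol2 ∧ ∀ π2' ∈ Pol2, V x π1 (b2 x π1) ≤ V x π1 π2')
    (hdom2 : ∀ x, ∀ π2 ∈ Pol2, ∃ π2' ∈ Pol2,
      μ * ((-(V x (b1 x π2) (b2 x (b1 x π2)))) + V x (b1 x π2) π2) ≤
        ⟪-(G2 x (b1 x π2) π2), π2' - π2⟫)
    (hdom1 : ∀ x, ∀ π1 ∈ Pol1, ∃ π1' ∈ Pol1,
      μ * (V x (b1 x (b2 x π1)) (b2 x π1) - V x π1 (b2 x π1)) ≤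
        ⟪G1 x π1 (b2 x π1), π1' - π1⟫)
    (ψ : X → E1 → E2 → ℝ)
    (hψ : ∀ x π1 π2, ψ x π1 π2 = V x (b1 x π2) π2 - V x π1 (b2 x π1))
    (x : X) (π1 : E1) (π2 : E2) (h1 : π1 ∈ Pol1) (h2 : π2 ∈ Pol2)
    (ψmin : ℝ)
    (hψmin : IsLeast ((fun q : E1 × E2 => ψ x q.1 q.2) '' (Pol1 ×ˢ Pol2)) ψmin) :
    ∃ π1' ∈ Pol1, ∃ π2' ∈ Pol2,
      μ * (ψ x π1 π2 - ψmin) ≤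
        ⟪-(G1 x π1 (b2 x π1)), π1 - π1'⟫ + ⟪G2 x (b1 x π2) π2, π2 - π2'⟫ := by
  obtain ⟨π1', hπ1', hd1⟩ := hdom1 x π1 h1
  obtain ⟨π2', hπ2', hd2⟩ := hdom2 x π2 h2
  refine ⟨π1', hπ1', π2', hπ2', ?_⟩
  have e1 : ⟪-(G1 x π1 (b2 x π1)), π1 - π1'⟫ = ⟪G1 x π1 (b2 x π1), π1' - π1⟫ := by
    simp [inner_neg_left, inner_sub_right]; ring
  have e2 : ⟪G2 x (b1 x π2) π2, π2 - π2'⟫ = ⟪-(G2 x (b1 x π2) π2), π2' - π2⟫ := by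
    simp [inner_neg_left, inner_sub_right]; ring
  rw [e1, e2]
  -- ψmin ≥ 0
  obtain ⟨⟨a, b⟩, hab, hval⟩ := hψmin.1
  have ha : a ∈ Pol1 := hab.1
  have hb : b ∈ Pol2 := hab.2
  have hmin0 : 0 ≤ ψmin := by
    have hV1 : V x a b ≤ V x (b1 x b) b := (hb1 x b).2 a ha
    have hV2 : V x a (b2 x a) ≤ V x a b := (hb2 x a).2 b hb
    have := hψ x a b
    simp only at hval
    linarith [hval ▸ this]
  have hA : V x (b1 x π2) (b2 x (b1 x π2)) ≤ V x (b1 x π2) (b2 x π1) :=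
    (hb2 x (b1 x π2)).2 _ (hb2 x π1).1
  have hB : V x (b1 x π2) (b2 x π1) ≤ V x (b1 x (b2 x π1)) (b2 x π1) :=
    (hb1 x (b2 x π1)).2 _ (hb1 x π2).1
  have hψe := hψ x π1 π2
  nlinarith [hd1, hd2, mul_le_mul_of_nonneg_left (le_trans hA hB) hμ.le,
    mul_nonneg hμ.le hmin0]
end

section
/- If F_λ = f + λψ with f having bounded gradient ‖∇_π f‖ ≤ L, ψ nonnegative satisfying the gradient dominance max_{π'∈Π}⟨∇_π ψ(x,π), π−π'⟩ ≥ μ(ψ(x,π) − min_{π∈Π}ψ(x,π)) with min_π ψ(x,π) = 0, Π has diameter ≤ 1, and λ ≥ L/(μδ), then any point (x_λ,π_λ) stationary in π for F_λ satisfies ψ(x_λ,π_λ) ≤ δ; moreover if (x_λ,π_λ) is a local minimizer of F_λ then it is a local minimizer of f on the relaxed feasible set {(x,π) : ψ(x,π) ≤ ε_λ} with ε_λ = ψ(x_λ,π_λ). -/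
open RealInnerProductSpace

/-- **Penalty method for the Nikaido–Isoda penalty: stationary points and local
minimizers.** Suppose `‖∇_π f‖ ≤ L`, the nonnegative penalty `ψ` has zero minimum in
`π` for every `x` and satisfies the gradient dominance
`max_{π'∈Π} ⟨∇_π ψ(x,π), π - π'⟩ ≥ μ (ψ(x,π) - min_Π ψ(x,·)) = μ ψ(x,π)`, the policy
class `Pol` has diameter at most `1`, and `λ ≥ L/(μ δ)`.  Then any point `(xλ, πλ)`
stationary in `π` for `F_λ = f + λ ψ` has `ψ(xλ, πλ) ≤ δ`; moreover if `(xλ, πλ)` is a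
local minimizer of `F_λ` on `XS ×ˢ Pol` then it is a local minimizer of `f` on the
relaxed feasible set `{(x, π) ∈ XS ×ˢ Pol : ψ(x,π) ≤ ε_λ}` with `ε_λ = ψ(xλ, πλ)`. -/
theorem nikaido_isoda_penalty_stationary {X E : Type*}
    [NormedAddCommGroup X] [NormedSpace ℝ X]
    [NormedAddCommGroup E] [InnerProductSpace ℝ E] [CompleteSpace E]
    (XS : Set X) (hXSconv : Convex ℝ XS) (hXScomp : IsCompact XS)
    (Pol : Set E) (hPolconv : Convex ℝ Pol) (hPolcomp : IsCompact Pol)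
    (hdiam : ∀ p ∈ Pol, ∀ q ∈ Pol, ‖p - q‖ ≤ 1)
    (f ψ : X → E → ℝ) (Gf Gψ : X → E → E) (L μ δ lam : ℝ)
    (hL : 0 ≤ L) (hμ : 0 < μ) (hδ : 0 < δ) (hlam_pos : 0 < lam)
    (hlam : L / (μ * δ) ≤ lam)
    (hGf : ∀ x π, HasGradientAt (f x) (Gf x π) π)
    (hGψ : ∀ x π, HasGradientAt (ψ x) (Gψ x π) π)
    (hGfbound : ∀ x π, ‖Gf x π‖ ≤ L)
    (hψpos : ∀ x π, 0 ≤ ψ x π)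
    (hψzero : ∀ x, ∃ π ∈ Pol, ψ x π = 0)
    (hdom : ∀ x, ∀ π ∈ Pol, ∃ π' ∈ Pol, μ * ψ x π ≤ ⟪Gψ x π, π - π'⟫)
    (xl : X) (πl : E) (hxl : xl ∈ XS) (hπl : πl ∈ Pol)
    (hstat : ∀ π' ∈ Pol, ⟪Gf xl πl + lam • Gψ xl πl, πl - π'⟫ ≤ 0) :
    ψ xl πl ≤ δ ∧
    (IsLocalMinOn (fun z : X × E => f z.1 z.2 + lam * ψ z.1 z.2) (XS ×ˢ Pol)
        (xl, πl) →
      IsLocalMinOn (fun z : X × E => f z.1 z.2)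
        ((XS ×ˢ Pol) ∩ {z : X × E | ψ z.1 z.2 ≤ ψ xl πl}) (xl, πl)) := by

  have hψδ : ψ xl πl ≤ δ := by
    obtain ⟨π', hπ', hdom'⟩ := hdom xl πl hπl
    have hs := hstat π' hπ'
    rw [inner_add_left, real_inner_smul_left] at hs
    have hcs : ⟪Gf xl πl, πl - π'⟫ ≥ -L := by
      have h1 : |⟪Gf xl πl, πl - π'⟫| ≤ ‖Gf xl πl‖ * ‖πl - π'‖ := abs_real_inner_le_norm _ _
      have h2 : ‖Gf xl πl‖ * ‖πl - π'‖ ≤ L * 1 :=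
        mul_le_mul (hGfbound xl πl) (hdiam πl hπl π' hπ') (norm_nonneg _) hL
      nlinarith [abs_le.mp h1]
    have key : lam * (μ * ψ xl πl) ≤ L := by
      have := mul_le_mul_of_nonneg_left hdom' hlam_pos.le
      linarith
    have hL' : L ≤ lam * (μ * δ) := by
      rw [div_le_iff₀ (by positivity)] at hlam
      linarith [hlam]
    have := key.trans hL'
    have hlm : 0 < lam * μ := by positivity
    nlinarith
  refine ⟨hψδ, fun hmin => ?_⟩
  have hsub : IsLocalMinOn (fun z : X × E => f z.1 z.2 + lam * ψ z.1 z.2)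
      ((XS ×ˢ Pol) ∩ {z : X × E | ψ z.1 z.2 ≤ ψ xl πl}) (xl, πl) :=
    hmin.filter_mono (nhdsWithin_mono _ Set.inter_subset_left)
  rw [IsLocalMinOn, IsMinFilter] at hsub ⊢
  filter_upwards [hsub, eventually_mem_nhdsWithin] with z hz hzmem
  have hψz : ψ z.1 z.2 ≤ ψ xl πl := hzmem.2
  nlinarith
end
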